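/- arXiv:1808.05784 — 2 statements merged into one kernel-verified Lean document; each statement's English description precedes it below -/
import Mathlib

section
/- The expected disagreement over views is lower bounded by the ρ-average of the view-specific expected disagreements: d_D(ρ) ≥ E_{v∼ρ} d_D(Q_v). -/
open MeasureTheory

noncomputable section

/-- The 0-1 loss: `1` if the two values differ, `0` otherwise. -/
def zoLoss (a b : ℝ) : ℝ := if a = b then 0 else 1

variable {V : ℕ} {X : Fin V → Type*} [∀ v, MeasurableSpace (X v)]
  {H : Fin V → Type*} [∀ v, MeasurableSpace (H v)]

/-- Expected disagreement `d_D(ρ)` between pairs of voters (over the marginal of `D` on `X`). -/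
def disagreement (ev : ∀ v, H v → X v → ℝ) (D : Measure ((∀ v, X v) × ℝ))
    (Q : ∀ v, Measure (H v)) (ρ : Fin V → ℝ) : ℝ :=
  ∫ x, (∑ v, ∑ v', ρ v * ρ v' *
    ∫ h, (∫ h', zoLoss (ev v h (x v)) (ev v' h' (x v')) ∂(Q v')) ∂(Q v)) ∂(D.map Prod.fst)

/-- View-specific expected disagreement `d_D(Q_v)` (over the marginal of `D` on `X`). -/
def disagreementView (ev : ∀ v, H v → X v → ℝ) (D : Measure ((∀ v, X v) × ℝ))
    (Q : ∀ v, Measure (H v)) (v : Fin V) : ℝ :=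
  ∫ x, (∫ h, (∫ h', zoLoss (ev v h (x v)) (ev v h' (x v)) ∂(Q v)) ∂(Q v)) ∂(D.map Prod.fst)

/-- If `a` and `b` are signs, the 0-1 loss is `(1 - a*b)/2`. -/
lemma zoLoss_eq_of_sign {a b : ℝ} (ha : a = 1 ∨ a = -1) (hb : b = 1 ∨ b = -1) :
    zoLoss a b = (1 - a * b) / 2 := by
  rcases ha with rfl | rfl <;> rcases hb with rfl | rfl <;> norm_num [zoLoss]

/-- **Lower bound on the disagreement.** The expected disagreement over views is lower
bounded by the `ρ`-average of the view-specific expected disagreements: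
`d_D(ρ) ≥ E_{v∼ρ} d_D(Q_v)`. -/
theorem disagreement_ge_average_disagreementView
    (hV : 2 ≤ V)
    (ev : ∀ v, H v → X v → ℝ)
    (hmeas : ∀ v, Measurable (fun q : H v × X v => ev v q.1 q.2))
    (hsign : ∀ v h x, ev v h x = 1 ∨ ev v h x = -1)
    (D : Measure ((∀ v, X v) × ℝ)) [IsProbabilityMeasure D]
    (hD : ∀ᵐ p ∂D, p.2 = 1 ∨ p.2 = -1)
    (Q : ∀ v, Measure (H v)) [∀ v, IsProbabilityMeasure (Q v)]
    (ρ : Fin V → ℝ) (hρ0 : ∀ v, 0 ≤ ρ v) (hρ1 : ∑ v, ρ v = 1) :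
    ∑ v, ρ v * disagreementView ev D Q v ≤ disagreement ev D Q ρ := by
  classical
  set μ : Measure (∀ v, X v) := D.map Prod.fst with hμ
  haveI : IsProbabilityMeasure μ := Measure.isProbabilityMeasure_map measurable_fst.aemeasurable
  set F : ∀ v, X v → ℝ := fun v y => ∫ h, ev v h y ∂(Q v) with hF
  -- measurability of F
  have hFmeas : ∀ v, StronglyMeasurable (F v) := by
    intro v
    have h1 : StronglyMeasurable (fun p : X v × H v => ev v p.2 p.1) :=
      ((hmeas v).comp measurable_swap).stronglyMeasurable
    exact h1.integral_prod_right'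
  have hFmeas' : ∀ v, Measurable fun x : (∀ v, X v) => F v (x v) := fun v =>
    (hFmeas v).measurable.comp (measurable_pi_apply v)
  -- integrability of voters
  have hInt1 : ∀ v (y : X v), Integrable (fun h => ev v h y) (Q v) := by
    intro v y
    refine (integrable_const (1 : ℝ)).mono' ?_ ?_
    · exact ((hmeas v).comp (measurable_id.prodMk measurable_const)).aestronglyMeasurable
    · filter_upwards with h
      rcases hsign v h y with h1 | h1 <;> simp [h1]
  -- bound on F
  have hFbound : ∀ v y, |F v y| ≤ 1 := by
    intro v y
    have := norm_integral_le_of_norm_le_const (μ := Q v) (f := fun h => ev v h y) (C := 1)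
      (Filter.Eventually.of_forall fun h => by rcases hsign v h y with h1 | h1 <;> simp [h1])
    simpa [Real.norm_eq_abs, measure_univ] using this
  have hFsq : ∀ v y, (F v y) ^ 2 ≤ 1 := fun v y => (sq_le_one_iff_abs_le_one _).2 (hFbound v y)
  -- the key computation of the double integral
  have key : ∀ (v v' : Fin V) (x : ∀ v, X v),
      (∫ h, (∫ h', zoLoss (ev v h (x v)) (ev v' h' (x v')) ∂(Q v')) ∂(Q v))
        = (1 - F v (x v) * F v' (x v')) / 2 := by
    intro v v' x
    have inner : ∀ h, (∫ h', zoLoss (ev v h (x v)) (ev v' h' (x v')) ∂(Q v'))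
        = (1 - ev v h (x v) * F v' (x v')) / 2 := by
      intro h
      have e : (fun h' => zoLoss (ev v h (x v)) (ev v' h' (x v')))
          = fun h' => (1 - ev v h (x v) * ev v' h' (x v')) / 2 :=
        funext fun h' => zoLoss_eq_of_sign (hsign v h (x v)) (hsign v' h' (x v'))
      rw [e, integral_div,
        integral_sub (integrable_const 1) ((hInt1 v' (x v')).const_mul _),
        integral_const, integral_const_mul]
      simp [measure_univ, hF]
    have e2 : (fun h => ∫ h', zoLoss (ev v h (x v)) (ev v' h' (x v')) ∂(Q v'))
        = fun h => (1 - ev v h (x v) * F v' (x v')) / 2 := funext inner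
    rw [e2, integral_div,
      integral_sub (integrable_const 1) ((hInt1 v (x v)).mul_const _),
      integral_const, integral_mul_const]
    simp [measure_univ, hF]
  -- rewrite both sides
  have hview : ∀ v, disagreementView ev D Q v = ∫ x, (1 - (F v (x v)) ^ 2) / 2 ∂μ := by
    intro v
    rw [disagreementView, ← hμ]
    congr 1
    funext x
    rw [key v v x, sq]
  have hbig : disagreement ev D Q ρ = ∫ x, (1 - (∑ v, ρ v * F v (x v)) ^ 2) / 2 ∂μ := by
    rw [disagreement, ← hμ]
    congr 1
    funext x
    have e : ∀ v v' : Fin V, ρ v * ρ v' *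
        ∫ h, (∫ h', zoLoss (ev v h (x v)) (ev v' h' (x v')) ∂(Q v')) ∂(Q v)
          = ρ v * ρ v' * ((1 - F v (x v) * F v' (x v')) / 2) := by
      intro v v'; rw [key v v' x]
    rw [Finset.sum_congr rfl fun v _ => Finset.sum_congr rfl fun v' _ => e v v']
    set f : Fin V → ℝ := fun v => F v (x v) with hf
    have e0 : ∀ v v' : Fin V, ρ v * ρ v' * ((1 - f v * f v') / 2)
        = ρ v * ρ v' / 2 - (ρ v * f v) * (ρ v' * f v') / 2 := fun v v' => by ring
    calc ∑ v, ∑ v', ρ v * ρ v' * ((1 - f v * f v') / 2)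
        = ∑ v, ∑ v', (ρ v * ρ v' / 2 - (ρ v * f v) * (ρ v' * f v') / 2) :=
          Finset.sum_congr rfl fun v _ => Finset.sum_congr rfl fun v' _ => e0 v v'
      _ = (∑ v, ∑ v', ρ v * ρ v') / 2 - (∑ v, ∑ v', (ρ v * f v) * (ρ v' * f v')) / 2 := by
          simp only [Finset.sum_sub_distrib, Finset.sum_div]
      _ = ((∑ v, ρ v) * (∑ v, ρ v)) / 2 - ((∑ v, ρ v * f v) * (∑ v, ρ v * f v)) / 2 := by
          rw [← Finset.sum_mul_sum, ← Finset.sum_mul_sum]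
      _ = (1 - (∑ v, ρ v * f v) ^ 2) / 2 := by rw [hρ1]; ring
  -- integrability of the integrands
  have hIntView : ∀ v, Integrable (fun x => (1 - (F v (x v)) ^ 2) / 2) μ := by
    intro v
    refine (integrable_const (1 : ℝ)).mono' ?_ ?_
    · exact ((measurable_const.sub ((hFmeas' v).pow_const 2)).div_const 2).aestronglyMeasurable
    · filter_upwards with x
      rw [Real.norm_eq_abs, abs_le]
      constructor <;> nlinarith [hFsq v (x v), sq_nonneg (F v (x v))]
  have hSbound : ∀ x : (∀ v, X v), |∑ v, ρ v * F v (x v)| ≤ 1 := by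
    intro x
    calc |∑ v, ρ v * F v (x v)| ≤ ∑ v, |ρ v * F v (x v)| := Finset.abs_sum_le_sum_abs _ _
      _ ≤ ∑ v, ρ v := Finset.sum_le_sum fun v _ => by
          rw [abs_mul, abs_of_nonneg (hρ0 v)]
          exact mul_le_of_le_one_right (hρ0 v) (hFbound v (x v))
      _ = 1 := hρ1
  have hIntBig : Integrable (fun x => (1 - (∑ v, ρ v * F v (x v)) ^ 2) / 2) μ := by
    refine (integrable_const (1 : ℝ)).mono' ?_ ?_
    · refine ((measurable_const.sub (Measurable.pow_const ?_ 2)).div_const 2).aestronglyMeasurable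
      exact Finset.measurable_sum _ fun v _ => (hFmeas' v).const_mul _
    · filter_upwards with x
      have h2 : (∑ v, ρ v * F v (x v)) ^ 2 ≤ 1 := (sq_le_one_iff_abs_le_one _).2 (hSbound x)
      rw [Real.norm_eq_abs, abs_le]
      constructor <;> nlinarith [sq_nonneg (∑ v, ρ v * F v (x v))]
  -- put it together
  rw [hbig]
  calc ∑ v, ρ v * disagreementView ev D Q v
      = ∫ x, ∑ v, ρ v * ((1 - (F v (x v)) ^ 2) / 2) ∂μ := by
        rw [integral_finset_sum _ fun v _ => (hIntView v).const_mul (ρ v)]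
        exact Finset.sum_congr rfl fun v _ => by rw [hview v, integral_const_mul]
    _ ≤ ∫ x, (1 - (∑ v, ρ v * F v (x v)) ^ 2) / 2 ∂μ := by
        refine integral_mono (integrable_finset_sum _ fun v _ => (hIntView v).const_mul (ρ v))
          hIntBig fun x => ?_
        -- pointwise Cauchy–Schwarz step
        have cs : (∑ v, ρ v * F v (x v)) ^ 2 ≤ ∑ v, ρ v * (F v (x v)) ^ 2 := by
          have h := Finset.sum_mul_sq_le_sq_mul_sq Finset.univ
            (fun v => Real.sqrt (ρ v)) (fun v => Real.sqrt (ρ v) * F v (x v))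
          have e1 : ∀ v : Fin V, Real.sqrt (ρ v) * (Real.sqrt (ρ v) * F v (x v))
              = ρ v * F v (x v) := fun v => by
            rw [← mul_assoc, Real.mul_self_sqrt (hρ0 v)]
          have e2 : ∀ v : Fin V, (Real.sqrt (ρ v)) ^ 2 = ρ v := fun v => Real.sq_sqrt (hρ0 v)
          have e3 : ∀ v : Fin V, (Real.sqrt (ρ v) * F v (x v)) ^ 2
              = ρ v * (F v (x v)) ^ 2 := fun v => by rw [mul_pow, e2]
          rw [Finset.sum_congr rfl fun v _ => e1 v, Finset.sum_congr rfl fun v _ => e2 v,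
            Finset.sum_congr rfl fun v _ => e3 v, hρ1, one_mul] at h
          exact h
        have el : ∑ v, ρ v * ((1 - (F v (x v)) ^ 2) / 2)
            = (1 - ∑ v, ρ v * (F v (x v)) ^ 2) / 2 := by
          rw [Finset.sum_congr rfl fun v _ =>
              show ρ v * ((1 - (F v (x v)) ^ 2) / 2)
                = (ρ v - ρ v * (F v (x v)) ^ 2) / 2 by ring,
            ← Finset.sum_div, Finset.sum_sub_distrib, hρ1]
        rw [el]
        linarith

end
end

section
/- (Margin form of the C-bound.) If the first moment of the margin satisfies μ₁(M_ρ^D) > 0, then the risk of the multiview weighted majority vote satisfies R_D(B_ρ) = P_{(x,y)∼D}(M_ρ(x,y) ≤ 0) ≤ Var(M_ρ^D) / (Var(M_ρ^D) + μ₁(M_ρ^D)²) = 1 − μ₁(M_ρ^D)² / μ₂(M_ρ^D), where Var(M_ρ^D) = μ₂(M_ρ^D) − μ₁(M_ρ^D)². -/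
/-!
For `c ≥ 0` the pointwise inequality `2 c M - c² M² ≤ 1_{M > 0}` integrates to
`2 c μ₁ - c² μ₂ ≤ P(M > 0)`, and the choice `c = μ₁ / μ₂` gives `P(M > 0) ≥ μ₁² / μ₂`,
which is the C-bound since `μ₂ = Var + μ₁²`. As the labels are `±1`, the majority vote
errs exactly when `y` times the weighted vote is nonpositive, i.e. when the margin is.
-/

open MeasureTheory

noncomputable section

variable {V : ℕ} {X : Fin V → Type*} [∀ v, MeasurableSpace (X v)]
  {H : Fin V → Type*} [∀ v, MeasurableSpace (H v)]

/-- The margin `M_ρ(x,y) = E_{v∼ρ} E_{h∼Q_v} y·h(x^v)` of the multiview majority vote. -/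
def margin (ev : ∀ v, H v → X v → ℝ) (Q : ∀ v, Measure (H v)) (ρ : Fin V → ℝ)
    (p : (∀ v, X v) × ℝ) : ℝ :=
  ∑ v, ρ v * ∫ h, p.2 * ev v h (p.1 v) ∂(Q v)

/-- First moment of the margin `μ₁(M_ρ^D)`. -/
def marginMoment1 (ev : ∀ v, H v → X v → ℝ) (D : Measure ((∀ v, X v) × ℝ))
    (Q : ∀ v, Measure (H v)) (ρ : Fin V → ℝ) : ℝ :=
  ∫ p, margin ev Q ρ p ∂D

/-- Second moment of the margin `μ₂(M_ρ^D)`. -/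
def marginMoment2 (ev : ∀ v, H v → X v → ℝ) (D : Measure ((∀ v, X v) × ℝ))
    (Q : ∀ v, Measure (H v)) (ρ : Fin V → ℝ) : ℝ :=
  ∫ p, (margin ev Q ρ p) ^ 2 ∂D

/-- Variance of the margin `Var(M_ρ^D) = μ₂(M_ρ^D) - μ₁(M_ρ^D)²`. -/
def marginVar (ev : ∀ v, H v → X v → ℝ) (D : Measure ((∀ v, X v) × ℝ))
    (Q : ∀ v, Measure (H v)) (ρ : Fin V → ℝ) : ℝ :=
  marginMoment2 ev D Q ρ - (marginMoment1 ev D Q ρ) ^ 2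

/-- The multiview weighted majority vote `B_ρ`. -/
def majVote (ev : ∀ v, H v → X v → ℝ) (Q : ∀ v, Measure (H v)) (ρ : Fin V → ℝ)
    (x : ∀ v, X v) : ℝ :=
  Real.sign (∑ v, ρ v * ∫ h, ev v h (x v) ∂(Q v))

/-- Risk of the multiview weighted majority vote `R_D(B_ρ)`. -/
def mvRisk (ev : ∀ v, H v → X v → ℝ) (D : Measure ((∀ v, X v) × ℝ))
    (Q : ∀ v, Measure (H v)) (ρ : Fin V → ℝ) : ℝ :=
  (D {p | majVote ev Q ρ p.1 ≠ p.2}).toReal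

lemma Real.sign_ne_iff_mul_nonpos {y r : ℝ} (hy : y = 1 ∨ y = -1) :
    Real.sign r ≠ y ↔ y * r ≤ 0 := by
  rcases lt_trichotomy r 0 with hr | rfl | hr
  · rcases hy with rfl | rfl <;> norm_num [Real.sign_of_neg hr, hr.le, hr]
  · rcases hy with rfl | rfl <;> simp
  · rcases hy with rfl | rfl <;> norm_num [Real.sign_of_pos hr, hr.le, hr]

section SecondMoment

variable {Ω : Type*} {f : Ω → ℝ}

lemma two_mul_sub_sq_le_indicator_pos {c : ℝ} (hc : 0 ≤ c) (x : Ω) :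
    2 * c * f x - (c * f x) ^ 2 ≤ {x | 0 < f x}.indicator 1 x := by
  by_cases hx : 0 < f x
  · simp only [Set.indicator_of_mem (show x ∈ {x | 0 < f x} from hx), Pi.one_apply]
    nlinarith [sq_nonneg (c * f x - 1)]
  · simp only [Set.indicator_of_notMem (show x ∉ {x | 0 < f x} from hx)]
    nlinarith [mul_nonpos_of_nonneg_of_nonpos hc (not_lt.mp hx), sq_nonneg (c * f x)]

variable [MeasurableSpace Ω] {μ : Measure Ω}

lemma sq_integral_le_integral_sq_mul_measureReal_pos [IsFiniteMeasure μ]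
    (hf : Integrable f μ) (hf2 : Integrable (fun x ↦ f x ^ 2) μ) (hpos : 0 < ∫ x, f x ∂μ) :
    (∫ x, f x ∂μ) ^ 2 ≤ (∫ x, f x ^ 2 ∂μ) * μ.real {x | 0 < f x} := by
  set m := ∫ x, f x ∂μ
  set s := ∫ x, f x ^ 2 ∂μ
  set P := μ.real {x | 0 < f x}
  have hP : 0 ≤ P := measureReal_nonneg
  have hpos_set : NullMeasurableSet {x | 0 < f x} μ :=
    nullMeasurableSet_lt aemeasurable_const hf.aemeasurable
  have key : ∀ c, 0 ≤ c → 2 * c * m - c ^ 2 * s ≤ P := by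
    intro c hc
    calc 2 * c * m - c ^ 2 * s = ∫ x, 2 * c * f x - (c * f x) ^ 2 ∂μ := by
          simp_rw [mul_pow]
          rw [integral_sub (hf.const_mul _) (hf2.const_mul _), integral_const_mul,
            integral_const_mul]
      _ ≤ ∫ x, {x | 0 < f x}.indicator 1 x ∂μ :=
          integral_mono ((hf.const_mul _).sub (by simpa only [mul_pow] using hf2.const_mul _))
            ((integrable_const 1).indicator₀ hpos_set)
            (two_mul_sub_sq_le_indicator_pos hc)
      _ = P := by
          rw [integral_indicator₀ hpos_set, Pi.one_def, setIntegral_const, smul_eq_mul, mul_one]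
  have hs_nonneg : 0 ≤ s := integral_nonneg fun x ↦ sq_nonneg (f x)
  rcases hs_nonneg.eq_or_lt with hs | hs
  · -- with `s = 0` the left-hand side of `key` is unbounded in `c`
    have h := key (P / m + 1) (by positivity)
    have hc : 2 * (P / m + 1) * m = 2 * P + 2 * m := by field_simp
    rw [← hs, hc] at h
    linarith
  · have h := key (m / s) (by positivity)
    have hc : 2 * (m / s) * m - (m / s) ^ 2 * s = m ^ 2 / s := by field_simp; ring
    rw [hc, div_le_iff₀ hs] at h
    linarith

lemma integral_sq_pos_of_integral_pos [IsFiniteMeasure μ]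
    (hf : Integrable f μ) (hf2 : Integrable (fun x ↦ f x ^ 2) μ) (hpos : 0 < ∫ x, f x ∂μ) :
    0 < ∫ x, f x ^ 2 ∂μ := by
  have h := sq_integral_le_integral_sq_mul_measureReal_pos hf hf2 hpos
  exact pos_of_mul_pos_left ((pow_pos hpos 2).trans_le h) measureReal_nonneg

lemma measureReal_nonpos_le_one_sub_sq_integral_div [IsProbabilityMeasure μ]
    (hf : Integrable f μ) (hf2 : Integrable (fun x ↦ f x ^ 2) μ) (hpos : 0 < ∫ x, f x ∂μ) :
    μ.real {x | f x ≤ 0} ≤ 1 - (∫ x, f x ∂μ) ^ 2 / ∫ x, f x ^ 2 ∂μ := by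
  have hcompl : {x | f x ≤ 0} = {x | 0 < f x}ᶜ := by ext x; simp
  rw [hcompl,
    probReal_compl_eq_one_sub₀ (nullMeasurableSet_lt aemeasurable_const hf.aemeasurable)]
  refine sub_le_sub_left ((div_le_iff₀ (integral_sq_pos_of_integral_pos hf hf2 hpos)).mpr ?_) 1
  rw [mul_comm]
  exact sq_integral_le_integral_sq_mul_measureReal_pos hf hf2 hpos

end SecondMoment

def weightedVote (ev : ∀ v, H v → X v → ℝ) (Q : ∀ v, Measure (H v)) (ρ : Fin V → ℝ)
    (x : ∀ v, X v) : ℝ :=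
  ∑ v, ρ v * ∫ h, ev v h (x v) ∂(Q v)

section Multiview

variable {ev : ∀ v, H v → X v → ℝ} {Q : ∀ v, Measure (H v)} {ρ : Fin V → ℝ}

omit [∀ v, MeasurableSpace (X v)] in
lemma margin_eq_mul_weightedVote (p : (∀ v, X v) × ℝ) :
    margin ev Q ρ p = p.2 * weightedVote ev Q ρ p.1 := by
  simp only [margin, weightedVote, integral_const_mul, Finset.mul_sum]
  exact Finset.sum_congr rfl fun v _ ↦ by ring

lemma measurable_weightedVote [∀ v, SFinite (Q v)]
    (hmeas : ∀ v, Measurable fun q : H v × X v ↦ ev v q.1 q.2) :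
    Measurable (weightedVote ev Q ρ) :=
  Finset.measurable_sum _ fun v _ ↦ measurable_const.mul
    ((hmeas v).stronglyMeasurable.integral_prod_left'.measurable.comp (measurable_pi_apply v))

lemma measurable_margin [∀ v, SFinite (Q v)]
    (hmeas : ∀ v, Measurable fun q : H v × X v ↦ ev v q.1 q.2) :
    Measurable (margin ev Q ρ) := by
  rw [funext margin_eq_mul_weightedVote]
  exact measurable_snd.mul ((measurable_weightedVote hmeas).comp measurable_fst)

omit [∀ v, MeasurableSpace (X v)] in
lemma abs_weightedVote_le_one [∀ v, IsProbabilityMeasure (Q v)]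
    (hev : ∀ v h x, |ev v h x| ≤ 1) (hρ0 : ∀ v, 0 ≤ ρ v) (hρ1 : ∑ v, ρ v = 1) (x : ∀ v, X v) :
    |weightedVote ev Q ρ x| ≤ 1 := by
  have hQ : ∀ v, |∫ h, ev v h (x v) ∂(Q v)| ≤ 1 := fun v ↦ by
    simpa using norm_integral_le_of_norm_le_const (μ := Q v) (f := fun h ↦ ev v h (x v))
      (C := 1) (.of_forall fun h ↦ hev v h (x v))
  calc |weightedVote ev Q ρ x| ≤ ∑ v, |ρ v * ∫ h, ev v h (x v) ∂(Q v)| :=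
        Finset.abs_sum_le_sum_abs _ _
    _ ≤ ∑ v, ρ v := Finset.sum_le_sum fun v _ ↦ by
        rw [abs_mul, abs_of_nonneg (hρ0 v)]
        exact mul_le_of_le_one_right (hρ0 v) (hQ v)
    _ = 1 := hρ1

variable {D : Measure ((∀ v, X v) × ℝ)}

lemma mvRisk_eq_measureReal_margin_nonpos (hD : ∀ᵐ p ∂D, p.2 = 1 ∨ p.2 = -1) :
    mvRisk ev D Q ρ = D.real {p | margin ev Q ρ p ≤ 0} := by
  refine congrArg ENNReal.toReal (measure_congr (Filter.eventuallyEq_set.2 ?_))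
  filter_upwards [hD] with p hp
  rw [margin_eq_mul_weightedVote]
  exact Real.sign_ne_iff_mul_nonpos hp

lemma ae_abs_margin_le_one [∀ v, IsProbabilityMeasure (Q v)] (hev : ∀ v h x, |ev v h x| ≤ 1)
    (hD : ∀ᵐ p ∂D, p.2 = 1 ∨ p.2 = -1) (hρ0 : ∀ v, 0 ≤ ρ v) (hρ1 : ∑ v, ρ v = 1) :
    ∀ᵐ p ∂D, |margin ev Q ρ p| ≤ 1 := by
  filter_upwards [hD] with p hp
  rw [margin_eq_mul_weightedVote, abs_mul]
  rcases hp with h | h <;> simpa [h] using abs_weightedVote_le_one hev hρ0 hρ1 p.1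

variable [IsFiniteMeasure D] [∀ v, IsProbabilityMeasure (Q v)]

lemma integrable_margin (hmeas : ∀ v, Measurable fun q : H v × X v ↦ ev v q.1 q.2)
    (hev : ∀ v h x, |ev v h x| ≤ 1) (hD : ∀ᵐ p ∂D, p.2 = 1 ∨ p.2 = -1)
    (hρ0 : ∀ v, 0 ≤ ρ v) (hρ1 : ∑ v, ρ v = 1) :
    Integrable (margin ev Q ρ) D :=
  .of_bound (measurable_margin (Q := Q) (ρ := ρ) hmeas).aestronglyMeasurable 1
    (ae_abs_margin_le_one hev hD hρ0 hρ1)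

lemma integrable_margin_sq (hmeas : ∀ v, Measurable fun q : H v × X v ↦ ev v q.1 q.2)
    (hev : ∀ v h x, |ev v h x| ≤ 1) (hD : ∀ᵐ p ∂D, p.2 = 1 ∨ p.2 = -1)
    (hρ0 : ∀ v, 0 ≤ ρ v) (hρ1 : ∑ v, ρ v = 1) :
    Integrable (fun p ↦ margin ev Q ρ p ^ 2) D :=
  .of_bound ((measurable_margin (Q := Q) (ρ := ρ) hmeas).pow_const 2).aestronglyMeasurable 1 <| by
    filter_upwards [ae_abs_margin_le_one (Q := Q) hev hD hρ0 hρ1] with p hp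
    simpa [abs_pow] using hp

end Multiview

theorem margin_form_cbound_general
    (ev : ∀ v, H v → X v → ℝ)
    (hmeas : ∀ v, Measurable (fun q : H v × X v => ev v q.1 q.2))
    (hsign : ∀ v h x, ev v h x = 1 ∨ ev v h x = -1)
    (D : Measure ((∀ v, X v) × ℝ)) [IsProbabilityMeasure D]
    (hD : ∀ᵐ p ∂D, p.2 = 1 ∨ p.2 = -1)
    (Q : ∀ v, Measure (H v)) [∀ v, IsProbabilityMeasure (Q v)]
    (ρ : Fin V → ℝ) (hρ0 : ∀ v, 0 ≤ ρ v) (hρ1 : ∑ v, ρ v = 1)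
    (hμ1 : 0 < marginMoment1 ev D Q ρ) :
    mvRisk ev D Q ρ = (D {p | margin ev Q ρ p ≤ 0}).toReal ∧
    (D {p | margin ev Q ρ p ≤ 0}).toReal ≤
      marginVar ev D Q ρ / (marginVar ev D Q ρ + (marginMoment1 ev D Q ρ) ^ 2) ∧
    marginVar ev D Q ρ / (marginVar ev D Q ρ + (marginMoment1 ev D Q ρ) ^ 2) =
      1 - (marginMoment1 ev D Q ρ) ^ 2 / marginMoment2 ev D Q ρ := by
  have hev : ∀ v h x, |ev v h x| ≤ 1 := fun v h x ↦ by
    rcases hsign v h x with h | h <;> simp [h]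
  have hint : Integrable (margin ev Q ρ) D := integrable_margin hmeas hev hD hρ0 hρ1
  have hint2 : Integrable (fun p ↦ margin ev Q ρ p ^ 2) D :=
    integrable_margin_sq hmeas hev hD hρ0 hρ1
  have hμ2 : 0 < marginMoment2 ev D Q ρ := integral_sq_pos_of_integral_pos hint hint2 hμ1
  have hvar : marginVar ev D Q ρ / (marginVar ev D Q ρ + marginMoment1 ev D Q ρ ^ 2) =
      1 - marginMoment1 ev D Q ρ ^ 2 / marginMoment2 ev D Q ρ := by
    rw [marginVar, sub_add_cancel, sub_div, div_self hμ2.ne']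
  refine ⟨mvRisk_eq_measureReal_margin_nonpos hD, ?_, hvar⟩
  rw [hvar]
  exact measureReal_nonpos_le_one_sub_sq_integral_div hint hint2 hμ1

/-- **Margin form of the C-bound.** If `μ₁(M_ρ^D) > 0` then
`R_D(B_ρ) = P_{(x,y)∼D}(M_ρ(x,y) ≤ 0) ≤ Var(M_ρ^D)/(Var(M_ρ^D) + μ₁(M_ρ^D)²)
  = 1 - μ₁(M_ρ^D)²/μ₂(M_ρ^D)`. -/
theorem margin_form_cbound
    (hV : 2 ≤ V)
    (ev : ∀ v, H v → X v → ℝ)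
    (hmeas : ∀ v, Measurable (fun q : H v × X v => ev v q.1 q.2))
    (hsign : ∀ v h x, ev v h x = 1 ∨ ev v h x = -1)
    (D : Measure ((∀ v, X v) × ℝ)) [IsProbabilityMeasure D]
    (hD : ∀ᵐ p ∂D, p.2 = 1 ∨ p.2 = -1)
    (Q : ∀ v, Measure (H v)) [∀ v, IsProbabilityMeasure (Q v)]
    (ρ : Fin V → ℝ) (hρ0 : ∀ v, 0 ≤ ρ v) (hρ1 : ∑ v, ρ v = 1)
    (hμ1 : 0 < marginMoment1 ev D Q ρ) :
    mvRisk ev D Q ρ = (D {p | margin ev Q ρ p ≤ 0}).toReal ∧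
    (D {p | margin ev Q ρ p ≤ 0}).toReal ≤
      marginVar ev D Q ρ / (marginVar ev D Q ρ + (marginMoment1 ev D Q ρ) ^ 2) ∧
    marginVar ev D Q ρ / (marginVar ev D Q ρ + (marginMoment1 ev D Q ρ) ^ 2) =
      1 - (marginMoment1 ev D Q ρ) ^ 2 / marginMoment2 ev D Q ρ :=
  margin_form_cbound_general ev hmeas hsign D hD Q ρ hρ0 hρ1 hμ1

end
end
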